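/- arXiv:2604.23922 — 2 statements merged into one kernel-verified Lean document; each statement's English description precedes it below -/
import Mathlib

section
/- Let H be a symmetric positive definite n×n real matrix and let s, y ∈ ℝⁿ satisfy yᵀs > 0. Writing ρ = 1/(yᵀs), the inverse BFGS update H⁺ = (I − ρ s yᵀ) H (I − ρ y sᵀ) + ρ s sᵀ is symmetric and positive definite. -/
/-!
Write `ρ = (yᵀs)⁻¹` and `A = I − ρ s yᵀ`, so that `H⁺ = A H Aᵀ + ρ s sᵀ` and
`xᵀ H⁺ x = (Aᵀx)ᵀ H (Aᵀx) + ρ (sᵀx)²`, a sum of two nonnegative terms.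
If `sᵀx ≠ 0` the second term is positive; if `sᵀx = 0` then `Aᵀx = x − ρ (sᵀx) y = x`,
and the first term is positive as soon as `x ≠ 0`.
-/

open Matrix

namespace Matrix

variable {m n : Type*} [Fintype m] [Fintype n]

theorem posDef_mul_mul_transpose_add_smul_vecMulVec {H : Matrix n n ℝ} (hH : H.PosDef)
    (A : Matrix m n ℝ) {ρ : ℝ} (hρ : 0 < ρ) {s : m → ℝ}
    (hker : ∀ x, Aᵀ *ᵥ x = 0 → s ⬝ᵥ x = 0 → x = 0) :
    (A * H * Aᵀ + ρ • vecMulVec s s).PosDef := by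
  have hAHA : (A * H * Aᵀ).PosSemidef := by
    simpa using hH.posSemidef.mul_mul_conjTranspose_same A
  have hss : (ρ • vecMulVec s s).PosSemidef := by
    simpa using (posSemidef_vecMulVec_self_star s).smul hρ.le
  refine PosDef.of_dotProduct_mulVec_pos (hAHA.isHermitian.add hss.isHermitian) fun x hx => ?_
  have hquad : x ⬝ᵥ ((A * H * Aᵀ + ρ • vecMulVec s s) *ᵥ x)
      = (Aᵀ *ᵥ x) ⬝ᵥ (H *ᵥ (Aᵀ *ᵥ x)) + ρ * (s ⬝ᵥ x) ^ 2 := by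
    rw [add_mulVec, dotProduct_add, ← mulVec_mulVec, ← mulVec_mulVec, dotProduct_mulVec x A,
      ← mulVec_transpose, smul_mulVec, vecMulVec_mulVec, dotProduct_smul, dotProduct_smul,
      op_smul_eq_smul, dotProduct_comm x s, smul_eq_mul, smul_eq_mul]
    ring
  rw [star_trivial, hquad]
  by_cases hsx : s ⬝ᵥ x = 0
  · have hAx : Aᵀ *ᵥ x ≠ 0 := fun h => hx (hker x h hsx)
    simpa [hsx] using hH.dotProduct_mulVec_pos hAx
  · have hconj : 0 ≤ (Aᵀ *ᵥ x) ⬝ᵥ (H *ᵥ (Aᵀ *ᵥ x)) := by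
      simpa using hH.posSemidef.dotProduct_mulVec_nonneg (Aᵀ *ᵥ x)
    positivity

theorem one_sub_smul_vecMulVec_mulVec [DecidableEq m] (ρ : ℝ) (y s x : m → ℝ) :
    (1 - ρ • vecMulVec y s) *ᵥ x = x - (ρ * (s ⬝ᵥ x)) • y := by
  rw [sub_mulVec, one_mulVec, smul_mulVec, vecMulVec_mulVec, op_smul_eq_smul, smul_smul]

end Matrix

/-- For a symmetric positive definite `H` and vectors `s`, `y` with
`yᵀs > 0`, writing `ρ = 1/(yᵀs)`, the inverse BFGS update
`H⁺ = (I − ρ s yᵀ) H (I − ρ y sᵀ) + ρ s sᵀ` is symmetric and positive definite. -/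
theorem inverse_bfgs_update_posDef {n : ℕ} (H : Matrix (Fin n) (Fin n) ℝ)
    (hH : H.PosDef) (s y : Fin n → ℝ) (hys : 0 < y ⬝ᵥ s) :
    ((1 - (y ⬝ᵥ s)⁻¹ • vecMulVec s y) * H * (1 - (y ⬝ᵥ s)⁻¹ • vecMulVec y s)
        + (y ⬝ᵥ s)⁻¹ • vecMulVec s s).IsSymm ∧
    ((1 - (y ⬝ᵥ s)⁻¹ • vecMulVec s y) * H * (1 - (y ⬝ᵥ s)⁻¹ • vecMulVec y s)
        + (y ⬝ᵥ s)⁻¹ • vecMulVec s s).PosDef := by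
  set ρ := (y ⬝ᵥ s)⁻¹
  have hAt : (1 - ρ • vecMulVec s y)ᵀ = 1 - ρ • vecMulVec y s := by simp
  have hpos : ((1 - ρ • vecMulVec s y) * H * (1 - ρ • vecMulVec y s)
      + ρ • vecMulVec s s).PosDef := by
    rw [← hAt]
    refine posDef_mul_mul_transpose_add_smul_vecMulVec hH _ (inv_pos.mpr hys) fun x hx hsx => ?_
    rwa [hAt, one_sub_smul_vecMulVec_mulVec, hsx, mul_zero, zero_smul, sub_zero] at hx
  exact ⟨by simpa [IsSymm] using hpos.isHermitian.eq, hpos⟩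
end

section
/- Let f : ℝⁿ → ℝ be twice continuously differentiable and let H̄ be a symmetric positive definite matrix with ∇²f(z) ≤ H̄ in the Loewner ordering for all z. Then the Simplified Fixed Hessian update x⁺ = x − H̄⁻¹ ∇f(x) satisfies f(x⁺) ≤ f(x) − ½ ∇f(x)ᵀ H̄⁻¹ ∇f(x); in particular the iteration monotonically decreases f, with strict decrease whenever ∇f(x) ≠ 0. -/
/-!
Along the segment `t ↦ x + t • d` with `d = -H̄⁻¹ ∇f(x)`, the second derivative of `f` is at most
`dᵀ H̄ d`, so two applications of the mean value inequality give the quadratic upper bound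
`f(x + d) ≤ f(x) + ∇f(x)ᵀ d + ½ dᵀ H̄ d`. For this `d` both `-∇f(x)ᵀ d` and `dᵀ H̄ d` equal
`∇f(x)ᵀ H̄⁻¹ ∇f(x)`, which is positive when `∇f(x) ≠ 0` because `H̄⁻¹` is positive definite.
-/

open Matrix Set

theorem image_le_of_second_deriv_le {φ ψ ψ' : ℝ → ℝ} {c t : ℝ}
    (hφ : ∀ s, HasDerivAt φ (ψ s) s) (hψ : ∀ s, HasDerivAt ψ (ψ' s) s) (hψ' : ∀ s, ψ' s ≤ c)
    (ht : 0 ≤ t) : φ t ≤ φ 0 + t * ψ 0 + c * t ^ 2 / 2 := by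
  have hψ_le : ∀ s ∈ Icc 0 t, ψ s ≤ ψ 0 + c * s :=
    image_le_of_deriv_right_le_deriv_boundary
      (fun s _ => (hψ s).continuousAt.continuousWithinAt) (fun s _ => (hψ s).hasDerivWithinAt)
      (by simp) (by fun_prop)
      (fun s _ => (((hasDerivAt_id s).const_mul c).const_add (ψ 0)).hasDerivWithinAt)
      (fun s _ => by simpa using hψ' s)
  refine image_le_of_deriv_right_le_deriv_boundary (B := fun s => φ 0 + s * ψ 0 + c * s ^ 2 / 2)
    (fun s _ => (hφ s).continuousAt.continuousWithinAt) (fun s _ => (hφ s).hasDerivWithinAt)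
    (by simp) (by fun_prop) (fun s _ => ?_) (fun s hs => hψ_le s (Ico_subset_Icc_self hs))
    ⟨ht, le_rfl⟩
  exact ((((hasDerivAt_id' s).mul_const (ψ 0)).const_add (φ 0)).fun_add
    (((hasDerivAt_pow 2 s).const_mul c).div_const 2)).hasDerivWithinAt.congr_deriv (by ring)

theorem ContDiff.image_add_le_of_second_deriv_le {E : Type*} [NormedAddCommGroup E]
    [NormedSpace ℝ E] {f : E → ℝ} (hf : ContDiff ℝ 2 f) {c : ℝ} (x d : E)
    (hc : ∀ z, fderiv ℝ (fun w => fderiv ℝ f w d) z d ≤ c) :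
    f (x + d) ≤ f x + fderiv ℝ f x d + c / 2 := by
  have hline : ∀ t : ℝ, HasDerivAt (fun t : ℝ => x + t • d) d t := fun t => by
    simpa using ((hasDerivAt_id t).smul_const d).const_add x
  have hf' : Differentiable ℝ f := hf.differentiable two_ne_zero
  have hfd : Differentiable ℝ (fun w => fderiv ℝ f w d) :=
    ((hf.fderiv_right (m := 1) le_rfl).clm_apply contDiff_const).differentiable one_ne_zero
  simpa using image_le_of_second_deriv_le (c := c) (t := 1)
    (fun t => (hf' _).hasFDerivAt.comp_hasDerivAt t (hline t))
    (fun t => (hfd _).hasFDerivAt.comp_hasDerivAt t (hline t)) (fun _ => hc _) zero_le_one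

theorem Matrix.dotProduct_mulVec_inv_mulVec {n R : Type*} [Fintype n] [DecidableEq n]
    [CommRing R] {A : Matrix n n R} (hA : IsUnit A.det) (v : n → R) :
    (A⁻¹ *ᵥ v) ⬝ᵥ (A *ᵥ (A⁻¹ *ᵥ v)) = v ⬝ᵥ (A⁻¹ *ᵥ v) := by
  rw [mulVec_mulVec, mul_nonsing_inv A hA, one_mulVec, dotProduct_comm]

/-- If `f` is twice continuously differentiable with gradient `g`
and the symmetric positive definite matrix `H̄` is a Loewner upper bound of the
Hessian of `f` everywhere, then the Simplified Fixed Hessian update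
`x⁺ = x − H̄⁻¹ ∇f(x)` satisfies `f(x⁺) ≤ f(x) − ½ ∇f(x)ᵀ H̄⁻¹ ∇f(x)`; in
particular the decrease is strict whenever `∇f(x) ≠ 0`. -/
theorem sfh_monotone_decrease {n : ℕ} (f : (Fin n → ℝ) → ℝ)
    (hf : ContDiff ℝ 2 f) (g : (Fin n → ℝ) → (Fin n → ℝ))
    (hg : ∀ z v, fderiv ℝ f z v = g z ⬝ᵥ v)
    (H : Matrix (Fin n) (Fin n) ℝ) (hHpd : H.PosDef)
    (hbound : ∀ z v : Fin n → ℝ,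
      fderiv ℝ (fun w => fderiv ℝ f w v) z v ≤ v ⬝ᵥ (H *ᵥ v))
    (x : Fin n → ℝ) :
    f (x - H⁻¹ *ᵥ g x) ≤ f x - (1/2) * (g x ⬝ᵥ (H⁻¹ *ᵥ g x)) ∧
    (g x ≠ 0 → f (x - H⁻¹ *ᵥ g x) < f x) := by
  have hdecrease : f (x - H⁻¹ *ᵥ g x) ≤ f x - (1/2) * (g x ⬝ᵥ (H⁻¹ *ᵥ g x)) := by
    have hstep := hf.image_add_le_of_second_deriv_le x (-(H⁻¹ *ᵥ g x)) (hbound · _)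
    rw [hg, mulVec_neg, neg_dotProduct_neg,
      dotProduct_mulVec_inv_mulVec (isUnit_iff_ne_zero.mpr hHpd.det_pos.ne')] at hstep
    rw [sub_eq_add_neg]
    linarith [dotProduct_neg (g x) (H⁻¹ *ᵥ g x)]
  refine ⟨hdecrease, fun hgx => ?_⟩
  have hpos : 0 < g x ⬝ᵥ (H⁻¹ *ᵥ g x) := hHpd.inv.dotProduct_mulVec_pos hgx
  linarith
end
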